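/- Let Γ be a discrete subring of ℂ, K the subfield of ℂ generated by Γ, and f : ℂ → Γ a Γ-valued algorithm whose fundamental set is contained in a ball of radius r centered at 0 with 0 < r < 1. Let z be a quadratic surd over K and let (a_n)_{n≥0} ⊆ Γ be the sequence of partial quotients of z with respect to f. If (a_n)_{n≥0} satisfies Condition 𝒞, then (a_n)_{n≥0} is eventually periodic, i.e., there exist m ≥ 0 and k ≥ 1 such that a_{n+k} = a_n for all n ≥ m. -/

import Mathlib

/-!
Let `pₙ / qₙ` be the convergents of the expansion of `z`, `xₙ` its complete quotients and
`Eₙ = qₙ z - pₙ`. Then `Eₙ₊₁ = -(xₙ - aₙ) Eₙ` with `|xₙ - aₙ| ≤ r < 1`, and together with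
`qₙ₊₁ Eₙ - qₙ Eₙ₊₁ = ±1` this keeps `qₙ Eₙ` bounded. After clearing denominators `z` is a root
of `A X² + B X + C` with coefficients in `Γ`, and substituting
`z = (pₙ₊₁ xₙ₊₁ + pₙ) / (qₙ₊₁ xₙ₊₁ + qₙ)` shows that `xₙ₊₁` is a root of
`F(pₙ₊₁, qₙ₊₁) X² + Bₙ X + F(pₙ, qₙ)`, where `F(p, q) = A p² + B p q + C q²`.
The factorisation `F(p, q) = -(q z - p)(A (p + q z) + B q)` bounds the outer coefficients, and
since the substitution is unimodular the discriminant `B² - 4 A C` is preserved, which bounds `Bₙ`.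
All these coefficients lie in the discrete ring `Γ`, so only finitely many quadratics, hence
finitely many complete quotients, occur; a repeated complete quotient makes the expansion
periodic from there on.
-/

theorem Subfield.exists_eq_div_of_mem_closure {F : Type*} [Field F] {Γ : Subring F} {w : F}
    (hw : w ∈ Subfield.closure (Γ : Set F)) : ∃ p ∈ Γ, ∃ q ∈ Γ, q ≠ 0 ∧ w = p / q := by
  obtain ⟨p, hp, q, hq, rfl⟩ := Subfield.mem_closure_iff.mp hw
  rw [Subring.closure_eq] at hp hq
  rcases eq_or_ne q 0 with rfl | hq0
  · exact ⟨0, Γ.zero_mem, 1, Γ.one_mem, one_ne_zero, by simp⟩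
  · exact ⟨p, hp, q, hq, hq0, rfl⟩

theorem exists_quadratic_mem_of_mem_closure {F : Type*} [Field F] {Γ : Subring F} {A B C z : F}
    (hA : A ∈ Subfield.closure (Γ : Set F)) (hB : B ∈ Subfield.closure (Γ : Set F))
    (hC : C ∈ Subfield.closure (Γ : Set F)) (hA0 : A ≠ 0) (hz : A * z ^ 2 + B * z + C = 0) :
    ∃ A' B' C' : F, A' ∈ Γ ∧ B' ∈ Γ ∧ C' ∈ Γ ∧ A' ≠ 0 ∧ A' * z ^ 2 + B' * z + C' = 0 := by
  obtain ⟨pA, hpA, qA, hqA, hqA0, rfl⟩ := Subfield.exists_eq_div_of_mem_closure hA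
  obtain ⟨pB, hpB, qB, hqB, hqB0, rfl⟩ := Subfield.exists_eq_div_of_mem_closure hB
  obtain ⟨pC, hpC, qC, hqC, hqC0, rfl⟩ := Subfield.exists_eq_div_of_mem_closure hC
  refine ⟨pA * qB * qC, pB * qA * qC, pC * qA * qB, Γ.mul_mem (Γ.mul_mem hpA hqB) hqC,
    Γ.mul_mem (Γ.mul_mem hpB hqA) hqC, Γ.mul_mem (Γ.mul_mem hpC hqA) hqB,
    mul_ne_zero (mul_ne_zero (left_ne_zero_of_mul (div_eq_mul_inv pA qA ▸ hA0)) hqB0) hqC0, ?_⟩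
  field_simp at hz
  linear_combination hz

theorem Subfield.inv_sub_notMem {F : Type*} [Field F] {K : Subfield F} {w c : F} (hw : w ∉ K)
    (hc : c ∈ K) : (w - c)⁻¹ ∉ K :=
  fun h => hw (by simpa using K.add_mem (K.inv_mem h) hc)

section ContinuedFraction

variable {R : Type*} [CommRing R]

/-- `convNum a n / convDen a n` is the convergent `[a 0; a 1, …, a (n - 1)]`; index `0` is the
formal fraction `1 / 0`. -/
def convNum (a : ℕ → R) : ℕ → R
  | 0 => 1
  | 1 => a 0
  | n + 2 => a (n + 1) * convNum a (n + 1) + convNum a n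

def convDen (a : ℕ → R) : ℕ → R
  | 0 => 0
  | 1 => 1
  | n + 2 => a (n + 1) * convDen a (n + 1) + convDen a n

def convErr (a : ℕ → R) (z : R) (n : ℕ) : R := convDen a n * z - convNum a n

variable {a : ℕ → R}

theorem convNum_add_two (n : ℕ) :
    convNum a (n + 2) = a (n + 1) * convNum a (n + 1) + convNum a n := rfl

theorem convDen_add_two (n : ℕ) :
    convDen a (n + 2) = a (n + 1) * convDen a (n + 1) + convDen a n := rfl

theorem convNum_mem {S : Subring R} (ha : ∀ n, a n ∈ S) : ∀ n, convNum a n ∈ S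
  | 0 => S.one_mem
  | 1 => ha 0
  | n + 2 => S.add_mem (S.mul_mem (ha _) (convNum_mem ha (n + 1))) (convNum_mem ha n)

theorem convDen_mem {S : Subring R} (ha : ∀ n, a n ∈ S) : ∀ n, convDen a n ∈ S
  | 0 => S.zero_mem
  | 1 => S.one_mem
  | n + 2 => S.add_mem (S.mul_mem (ha _) (convDen_mem ha (n + 1))) (convDen_mem ha n)

theorem convNum_succ_mul_convDen_sub_mul (a : ℕ → R) :
    ∀ n, convNum a (n + 1) * convDen a n - convNum a n * convDen a (n + 1) = (-1) ^ (n + 1)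
  | 0 => by simp [convNum, convDen]
  | n + 1 => by
    rw [convNum_add_two, convDen_add_two]
    linear_combination -convNum_succ_mul_convDen_sub_mul a n

theorem convNum_ne_zero_or_convDen_ne_zero [Nontrivial R] (a : ℕ → R) (n : ℕ) :
    convNum a n ≠ 0 ∨ convDen a n ≠ 0 := by
  by_contra! h
  have hdet := convNum_succ_mul_convDen_sub_mul a n
  rw [h.1, h.2] at hdet
  exact ((isUnit_one.neg).pow _).ne_zero (by simpa using hdet.symm)

theorem convErr_add_two (z : R) (n : ℕ) :
    convErr a z (n + 2) = a (n + 1) * convErr a z (n + 1) + convErr a z n := by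
  simp only [convErr, convNum_add_two, convDen_add_two]
  ring

theorem convDen_succ_mul_convErr_sub_mul (z : R) (n : ℕ) :
    convDen a (n + 1) * convErr a z n - convDen a n * convErr a z (n + 1) = (-1) ^ (n + 1) := by
  unfold convErr
  linear_combination convNum_succ_mul_convDen_sub_mul a n

variable {x : ℕ → R}

theorem convErr_add_mul_convErr_succ (hx : ∀ n, x (n + 1) * (x n - a n) = 1) :
    ∀ n, convErr a (x 0) n + x (n + 1) * convErr a (x 0) (n + 1) = 0
  | 0 => by
    simp only [convErr, convNum, convDen]
    linear_combination hx 0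
  | n + 1 => by
    rw [convErr_add_two]
    linear_combination x (n + 2) * convErr_add_mul_convErr_succ hx n
      - convErr a (x 0) (n + 1) * hx (n + 1)

theorem convErr_succ (hx : ∀ n, x (n + 1) * (x n - a n) = 1) (n : ℕ) :
    convErr a (x 0) (n + 1) = -(x n - a n) * convErr a (x 0) n := by
  linear_combination (x n - a n) * convErr_add_mul_convErr_succ hx n
    - convErr a (x 0) (n + 1) * hx n

end ContinuedFraction

section BinaryQuadraticForm

variable {R : Type*} [CommRing R]

def binQuad (A B C p q : R) : R := A * p ^ 2 + B * p * q + C * q ^ 2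

/-- The middle coefficient of `binQuad A B C (p * y + p') (q * y + q')` as a polynomial in `y`. -/
def binQuadPolar (A B C p q p' q' : R) : R :=
  2 * A * p * p' + B * (p * q' + p' * q) + 2 * C * q * q'

theorem binQuad_mem {S : Subring R} {A B C p q : R} (hA : A ∈ S) (hB : B ∈ S) (hC : C ∈ S)
    (hp : p ∈ S) (hq : q ∈ S) : binQuad A B C p q ∈ S := by
  unfold binQuad
  exact S.add_mem (S.add_mem (S.mul_mem hA (S.pow_mem hp 2)) (S.mul_mem (S.mul_mem hB hp) hq))
    (S.mul_mem hC (S.pow_mem hq 2))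

theorem binQuadPolar_mem {S : Subring R} {A B C p q p' q' : R} (hA : A ∈ S) (hB : B ∈ S)
    (hC : C ∈ S) (hp : p ∈ S) (hq : q ∈ S) (hp' : p' ∈ S) (hq' : q' ∈ S) :
    binQuadPolar A B C p q p' q' ∈ S := by
  have h2 : (2 : R) ∈ S := ofNat_mem S 2
  unfold binQuadPolar
  exact S.add_mem (S.add_mem (S.mul_mem (S.mul_mem (S.mul_mem h2 hA) hp) hp')
    (S.mul_mem hB (S.add_mem (S.mul_mem hp hq') (S.mul_mem hp' hq))))
    (S.mul_mem (S.mul_mem (S.mul_mem h2 hC) hq) hq')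

theorem binQuadPolar_sq_sub (A B C p q p' q' : R) :
    binQuadPolar A B C p q p' q' ^ 2 - 4 * binQuad A B C p q * binQuad A B C p' q' =
      (B ^ 2 - 4 * A * C) * (p * q' - p' * q) ^ 2 := by
  unfold binQuadPolar binQuad
  ring

theorem binQuadPolar_convNum_convDen_sq (A B C : R) (a : ℕ → R) (n : ℕ) :
    binQuadPolar A B C (convNum a (n + 1)) (convDen a (n + 1)) (convNum a n) (convDen a n) ^ 2 =
      B ^ 2 - 4 * A * C + 4 * binQuad A B C (convNum a (n + 1)) (convDen a (n + 1)) *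
        binQuad A B C (convNum a n) (convDen a n) := by
  have h := binQuadPolar_sq_sub A B C (convNum a (n + 1)) (convDen a (n + 1)) (convNum a n)
    (convDen a n)
  have hsq : ((-1 : R) ^ (n + 1)) ^ 2 = 1 := by
    rw [← pow_mul, mul_comm, pow_mul, neg_one_sq, one_pow]
  rw [convNum_succ_mul_convDen_sub_mul, hsq, mul_one] at h
  linear_combination h

variable {A B C z : R}

theorem binQuad_eq_neg_mul (hz : A * z ^ 2 + B * z + C = 0) (p q : R) :
    binQuad A B C p q = -((q * z - p) * (A * (p + z * q) + B * q)) := by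
  unfold binQuad
  linear_combination q ^ 2 * hz

/-- Substituting `z = (p y + p') / (q y + q')` into a quadratic equation for `z`. -/
theorem binQuad_mul_sq_add_binQuadPolar_mul_add_binQuad (hz : A * z ^ 2 + B * z + C = 0)
    {p q p' q' y : R} (hy : (q' * z - p') + y * (q * z - p) = 0) :
    binQuad A B C p q * y ^ 2 + binQuadPolar A B C p q p' q' * y + binQuad A B C p' q' = 0 := by
  unfold binQuad binQuadPolar
  linear_combination (q * y + q') ^ 2 * hz
    - (A * (p * y + p' + z * (q * y + q')) + B * (q * y + q')) * hy

end BinaryQuadraticForm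

theorem binQuad_ne_zero {F : Type*} [Field F] {K : Subfield F} {A B C z p q : F} (hA : A ∈ K)
    (hB : B ∈ K) (hA0 : A ≠ 0) (hz : A * z ^ 2 + B * z + C = 0) (hzK : z ∉ K) (hp : p ∈ K)
    (hq : q ∈ K) (hpq : p ≠ 0 ∨ q ≠ 0) : binQuad A B C p q ≠ 0 := by
  rw [binQuad_eq_neg_mul hz, neg_ne_zero]
  refine mul_ne_zero (fun h => ?_) (fun h => ?_)
  · by_cases hq0 : q = 0
    · simp_all
    · have hzq : z = p / q := eq_div_of_mul_eq hq0 (by linear_combination h)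
      exact hzK (hzq ▸ K.div_mem hp hq)
  · by_cases hq0 : q = 0
    · simp_all
    · have hzq : z = -(A * p + B * q) / (A * q) :=
        eq_div_of_mul_eq (mul_ne_zero hA0 hq0) (by linear_combination h)
      exact hzK (hzq ▸ K.div_mem (K.neg_mem (K.add_mem (K.mul_mem hA hp) (K.mul_mem hB hq)))
        (K.mul_mem hA hq))

section Bounds

variable {𝕜 : Type*} [NormedField 𝕜] {a x : ℕ → 𝕜} {r : ℝ}

theorem norm_binQuad_le {A B C z : 𝕜} (hz : A * z ^ 2 + B * z + C = 0) (p q : 𝕜) :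
    ‖binQuad A B C p q‖ ≤ ‖2 * A * z + B‖ * ‖q * (q * z - p)‖ + ‖A‖ * ‖q * z - p‖ ^ 2 := by
  have hF : binQuad A B C p q = A * (q * z - p) ^ 2 - (2 * A * z + B) * (q * (q * z - p)) := by
    rw [binQuad_eq_neg_mul hz]
    ring
  rw [hF]
  refine (norm_sub_le _ _).trans_eq ?_
  rw [norm_mul, norm_mul, norm_pow]
  ring

theorem norm_convErr_le_one (hx : ∀ n, x (n + 1) * (x n - a n) = 1)
    (hε : ∀ n, ‖x n - a n‖ ≤ 1) : ∀ n, ‖convErr a (x 0) n‖ ≤ 1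
  | 0 => by simp [convErr, convNum, convDen]
  | n + 1 => by
    rw [convErr_succ hx, norm_mul, norm_neg]
    exact mul_le_one₀ (hε n) (norm_nonneg _) (norm_convErr_le_one hx hε n)

/-- `r / (1 - r ^ 2)` is the fixed point of `t ↦ r + r ^ 2 * t`. -/
theorem norm_convDen_mul_convErr_le (hx : ∀ n, x (n + 1) * (x n - a n) = 1) (hr : r < 1)
    (hε : ∀ n, ‖x n - a n‖ ≤ r) : ∀ n, ‖convDen a n * convErr a (x 0) n‖ ≤ r / (1 - r ^ 2)
  | 0 => by
    have hr0 : 0 ≤ r := (norm_nonneg _).trans (hε 0)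
    simpa [convDen] using div_nonneg hr0 (by nlinarith)
  | n + 1 => by
    set ε := x n - a n
    have hr0 : 0 ≤ r := (norm_nonneg _).trans (hε 0)
    have hrec : convDen a (n + 1) * convErr a (x 0) (n + 1) =
        ε ^ 2 * (convDen a n * convErr a (x 0) n) - ε * (-1) ^ (n + 1) := by
      linear_combination (-ε) * convDen_succ_mul_convErr_sub_mul (a := a) (x 0) n
        + (convDen a (n + 1) - ε * convDen a n) * convErr_succ hx n
    have ih := norm_convDen_mul_convErr_le hx hr hε n
    calc ‖convDen a (n + 1) * convErr a (x 0) (n + 1)‖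
        ≤ ‖ε‖ ^ 2 * ‖convDen a n * convErr a (x 0) n‖ + ‖ε‖ := by
          rw [hrec]
          refine (norm_sub_le _ _).trans_eq ?_
          simp
      _ ≤ r ^ 2 * (r / (1 - r ^ 2)) + r := by gcongr <;> exact hε n
      _ = r / (1 - r ^ 2) := by field_simp [show 1 - r ^ 2 ≠ 0 by nlinarith]; ring

theorem norm_binQuad_convNum_convDen_le {A B C : 𝕜} (hz : A * x 0 ^ 2 + B * x 0 + C = 0)
    (hx : ∀ n, x (n + 1) * (x n - a n) = 1) (hr : r < 1) (hε : ∀ n, ‖x n - a n‖ ≤ r) (n : ℕ) :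
    ‖binQuad A B C (convNum a n) (convDen a n)‖ ≤ ‖2 * A * x 0 + B‖ * (r / (1 - r ^ 2)) + ‖A‖ := by
  have hE : ‖convErr a (x 0) n‖ ≤ 1 := norm_convErr_le_one hx (fun k => (hε k).trans hr.le) n
  refine (norm_binQuad_le hz _ _).trans (add_le_add ?_ ?_)
  · exact mul_le_mul_of_nonneg_left (norm_convDen_mul_convErr_le hx hr hε n) (norm_nonneg _)
  · exact mul_le_of_le_one_right (norm_nonneg _) (pow_le_one₀ (norm_nonneg _) hE)

/-- The discriminant `B ^ 2 - 4 * A * C` is invariant under the unimodular substitution. -/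
theorem norm_binQuadPolar_convNum_convDen_le {A B C : 𝕜} {M : ℝ}
    (hF : ∀ n, ‖binQuad A B C (convNum a n) (convDen a n)‖ ≤ M) (n : ℕ) :
    ‖binQuadPolar A B C (convNum a (n + 1)) (convDen a (n + 1)) (convNum a n) (convDen a n)‖ ≤
      ‖B ^ 2 - 4 * A * C‖ + (2 * M + 1) ^ 2 := by
  set t :=
    ‖binQuadPolar A B C (convNum a (n + 1)) (convDen a (n + 1)) (convNum a n) (convDen a n)‖
  have hM : 0 ≤ M := (norm_nonneg _).trans (hF 0)
  have h4 : ‖(4 : 𝕜)‖ ≤ 4 := by simpa using norm_nsmul_le (n := 4) (a := (1 : 𝕜))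
  have ht : t ^ 2 ≤ ‖B ^ 2 - 4 * A * C‖ + 4 * M * M := by
    rw [← norm_pow, binQuadPolar_convNum_convDen_sq]
    refine (norm_add_le _ _).trans (add_le_add_right ?_ _)
    rw [norm_mul, norm_mul]
    gcongr
    exacts [hF (n + 1), hF n]
  nlinarith [norm_nonneg (B ^ 2 - 4 * A * C), norm_nonneg
    (binQuadPolar A B C (convNum a (n + 1)) (convDen a (n + 1)) (convNum a n) (convDen a n))]

end Bounds

theorem Subring.finite_setOf_mem_norm_le {𝕜 : Type*} [NormedField 𝕜] [ProperSpace 𝕜]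
    (Γ : Subring 𝕜) [DiscreteTopology Γ] (M : ℝ) : {w | w ∈ Γ ∧ ‖w‖ ≤ M}.Finite := by
  have hset : {w | w ∈ Γ ∧ ‖w‖ ≤ M} = Metric.closedBall 0 M ∩ (Γ : Set 𝕜) := by
    ext
    simp [and_comm]
  rw [hset]
  exact Metric.finite_isBounded_inter_isClosed (isDiscrete_iff_discreteTopology.mpr ‹_›)
    Metric.isBounded_closedBall (AddSubgroup.isClosed_of_discrete (H := Γ.toAddSubgroup))

open Polynomial in
theorem Set.Finite.setOf_quadratic_root {F : Type*} [Field F] {S : Set F} (hS : S.Finite) :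
    {y | ∃ α ∈ S, ∃ β ∈ S, ∃ γ ∈ S, α ≠ 0 ∧ α * y ^ 2 + β * y + γ = 0}.Finite := by
  have hroots (α β γ : F) (hα : α ≠ 0) : {y | α * y ^ 2 + β * y + γ = 0}.Finite := by
    have hp : C α * X ^ 2 + C β * X + C γ ≠ 0 := fun h =>
      hα (by simpa using congrArg (coeff · 2) h)
    exact (finite_setOfPred_isRoot hp).subset fun y hy => by simpa using hy
  refine ((hS.sdiff (t := {0})).biUnion fun α hα => hS.biUnion fun β _ => hS.biUnion fun γ _ =>
    hroots α β γ (by simpa using hα.2)).subset ?_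
  rintro y ⟨α, hα, β, hβ, γ, hγ, hα0, hy⟩
  simp only [Set.mem_iUnion]
  exact ⟨α, ⟨hα, hα0⟩, β, hβ, γ, hγ, hy⟩

theorem exists_finite_forall_complete_quotient_mem {𝕜 : Type*} [NormedField 𝕜] [ProperSpace 𝕜]
    (Γ : Subring 𝕜) [DiscreteTopology Γ] {A B C : 𝕜} (hA : A ∈ Γ) (hB : B ∈ Γ) (hC : C ∈ Γ)
    (hA0 : A ≠ 0) {a x : ℕ → 𝕜} (hz : A * x 0 ^ 2 + B * x 0 + C = 0)
    (hzK : x 0 ∉ Subfield.closure (Γ : Set 𝕜)) (ha : ∀ n, a n ∈ Γ)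
    (hx : ∀ n, x (n + 1) * (x n - a n) = 1) {r : ℝ} (hr : r < 1) (hε : ∀ n, ‖x n - a n‖ ≤ r) :
    ∃ T : Set 𝕜, T.Finite ∧ ∀ n, x (n + 1) ∈ T := by
  set F : ℕ → 𝕜 := fun n => binQuad A B C (convNum a n) (convDen a n)
  set M := ‖2 * A * x 0 + B‖ * (r / (1 - r ^ 2)) + ‖A‖
  have hF (n : ℕ) : ‖F n‖ ≤ M := norm_binQuad_convNum_convDen_le hz hx hr hε n
  have hM : 0 ≤ M := (norm_nonneg _).trans (hF 0)
  set D := ‖B ^ 2 - 4 * A * C‖ + (2 * M + 1) ^ 2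
  have hFD (n : ℕ) : ‖F n‖ ≤ D := by nlinarith [hF n, norm_nonneg (B ^ 2 - 4 * A * C)]
  have hPQ (n : ℕ) : convNum a n ∈ Γ ∧ convDen a n ∈ Γ := ⟨convNum_mem ha n, convDen_mem ha n⟩
  have hΓK {w : 𝕜} (hw : w ∈ Γ) : w ∈ Subfield.closure (Γ : Set 𝕜) := Subfield.subset_closure hw
  refine ⟨_, (Γ.finite_setOf_mem_norm_le D).setOf_quadratic_root, fun n => ?_⟩
  refine ⟨F (n + 1), ⟨binQuad_mem hA hB hC (hPQ _).1 (hPQ _).2, hFD _⟩,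
    _, ⟨binQuadPolar_mem hA hB hC (hPQ _).1 (hPQ _).2 (hPQ n).1 (hPQ n).2,
      norm_binQuadPolar_convNum_convDen_le hF n⟩,
    F n, ⟨binQuad_mem hA hB hC (hPQ n).1 (hPQ n).2, hFD n⟩, ?_, ?_⟩
  · exact binQuad_ne_zero (hΓK hA) (hΓK hB) hA0 hz hzK (hΓK (hPQ _).1) (hΓK (hPQ _).2)
      (convNum_ne_zero_or_convDen_ne_zero a _)
  · exact binQuad_mul_sq_add_binQuadPolar_mul_add_binQuad hz (convErr_add_mul_convErr_succ hx n)

theorem orbit_add_eq_self_of_le {α : Type*} {x : ℕ → α} (g : α → α)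
    (hx : ∀ n, x (n + 1) = g (x n)) {i k : ℕ} (h : x (i + k) = x i) {n : ℕ} (hn : i ≤ n) :
    x (n + k) = x n := by
  obtain ⟨d, rfl⟩ := Nat.exists_eq_add_of_le hn
  induction d with
  | zero => exact h
  | succ d ih =>
    rw [show i + (d + 1) + k = i + d + k + 1 by omega, ← add_assoc, hx, hx, ih le_self_add]

theorem quadratic_surd_condition_C_eventually_periodic_general
    (Γ : Subring ℂ) (hΓdisc : DiscreteTopology Γ)
    (K : Subfield ℂ) (hK : K = Subfield.closure (Γ : Set ℂ))
    (f : ℂ → ℂ) (hfΓ : ∀ w, f w ∈ Γ)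
    (r : ℝ) (hr1 : r < 1)
    (hfund : ∀ w : ℂ, w ∉ K → ‖w - f w‖ ≤ r)
    (z : ℂ) (hzK : z ∉ K)
    (hsurd : ∃ A B C : ℂ, A ∈ K ∧ B ∈ K ∧ C ∈ K ∧ A ≠ 0 ∧
      A * z ^ 2 + B * z + C = 0)
    (zs : ℕ → ℂ) (hzs0 : zs 0 = z)
    (hzsrec : ∀ n, zs (n + 1) = (zs n - f (zs n))⁻¹)
    (a : ℕ → ℂ) (ha : ∀ n, a n = f (zs n)) :
    ∃ m k : ℕ, 1 ≤ k ∧ ∀ n, m ≤ n → a (n + k) = a n := by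
  subst hK hzs0
  obtain ⟨A, B, C, hA, hB, hC, hA0, hquad⟩ := hsurd
  obtain ⟨A, B, C, hA, hB, hC, hA0, hquad⟩ := exists_quadratic_mem_of_mem_closure hA hB hC hA0 hquad
  have haΓ (n : ℕ) : a n ∈ Γ := ha n ▸ hfΓ _
  have hzsK (n : ℕ) : zs n ∉ Subfield.closure (Γ : Set ℂ) := by
    induction n with
    | zero => exact hzK
    | succ n ih => exact hzsrec n ▸ Subfield.inv_sub_notMem ih (Subfield.subset_closure (hfΓ _))
  have hx (n : ℕ) : zs (n + 1) * (zs n - a n) = 1 := by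
    rw [hzsrec, ← ha]
    exact inv_mul_cancel₀ (sub_ne_zero.2 fun h => hzsK n (h ▸ Subfield.subset_closure (haΓ n)))
  have hε (n : ℕ) : ‖zs n - a n‖ ≤ r := ha n ▸ hfund _ (hzsK n)
  obtain ⟨T, hT, hmem⟩ :=
    exists_finite_forall_complete_quotient_mem Γ hA hB hC hA0 hquad hzK haΓ hx hr1 hε
  obtain ⟨i, j, hij, hzij⟩ := hT.exists_lt_map_eq_of_forall_mem hmem
  have hper : zs (i + 1 + (j - i)) = zs (i + 1) := by
    rw [show i + 1 + (j - i) = j + 1 by omega, hzij]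
  refine ⟨i + 1, j - i, by omega, fun n hn => ?_⟩
  rw [ha, ha, orbit_add_eq_self_of_le (fun w => (w - f w)⁻¹) hzsrec hper hn]

/-- Corollary (Lagrange theorem for algorithms): let `f` be a `Γ`-valued
algorithm whose fundamental set is contained in a ball of radius `r < 1`
centered at `0`, `z` a quadratic surd over the subfield `K` generated by the
discrete subring `Γ`, and suppose the partial quotients of `z` with respect to
`f` satisfy Condition 𝒞.  Then the sequence of partial quotients is eventually
periodic. -/
theorem quadratic_surd_condition_C_eventually_periodic
    (Γ : Subring ℂ) (hΓdisc : DiscreteTopology Γ)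
    (K : Subfield ℂ) (hK : K = Subfield.closure (Γ : Set ℂ))
    (f : ℂ → ℂ) (hfΓ : ∀ w, f w ∈ Γ) (hfalg : ∀ w, ‖w - f w‖ ≤ 1)
    (r : ℝ) (hr0 : 0 < r) (hr1 : r < 1)
    (hfund : ∀ w : ℂ, w ∉ K → ‖w - f w‖ ≤ r)
    (z : ℂ) (hzK : z ∉ K)
    (hsurd : ∃ A B C : ℂ, A ∈ K ∧ B ∈ K ∧ C ∈ K ∧ A ≠ 0 ∧
      A * z ^ 2 + B * z + C = 0)
    (zs : ℕ → ℂ) (hzs0 : zs 0 = z)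
    (hzsrec : ∀ n, zs (n + 1) = (zs n - f (zs n))⁻¹)
    (a : ℕ → ℂ) (ha : ∀ n, a n = f (zs n))
    (hC1 : ∀ n : ℕ, 1 ≤ n → 1 < ‖a n‖)
    (hC2 : ∀ n : ℕ, 1 ≤ n → ‖a (n + 1)‖ < 2 →
      ‖a (n + 1)‖ ^ 2 ≤
        ‖((‖a (n + 1)‖ ^ 2 - 1 : ℝ) : ℂ) * a n +
          (starRingEnd ℂ) (a (n + 1))‖) :
    ∃ m k : ℕ, 1 ≤ k ∧ ∀ n, m ≤ n → a (n + k) = a n :=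
  quadratic_surd_condition_C_eventually_periodic_general Γ hΓdisc K hK f hfΓ r hr1 hfund z hzK hsurd
    zs hzs0 hzsrec a ha
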